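/- arXiv:1204.3942 — 5 statements merged into one kernel-verified Lean document; each statement's English description precedes it below -/
import Mathlib

section
/- Let P : ℝ^p → ℝ be convex, nonnegative, and positively homogeneous of degree one, i.e., P(c • v) = c * P(v) for all c ≥ 0 and all v ∈ ℝ^p. Let λ ≥ 0 and a ∈ ℝ^p. Suppose v̂ ∈ ℝ^p is a global minimizer over ℝ^p of the penalized regression objective g(v) = (1/2)‖a − v‖₂² + λ P(v), and suppose v̂ ≠ 0. Then v* = v̂ / ‖v̂‖₂ is a global maximizer of f(v) = ⟨a, v⟩ − λ P(v) over the closed unit ball {v : ‖v‖₂ ≤ 1}. -/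
/-!
Write `f v = ⟪a, v⟫ - λ P v`, which is positively homogeneous. Expanding the square, `v̂` minimizes
the penalized objective iff it maximizes `f v - ‖v‖² / 2`. Restricting to the ray through `v̂`
forces `f v̂ = ‖v̂‖²`, so the maximal value is `‖v̂‖² / 2` and `f (v̂ / ‖v̂‖) = ‖v̂‖`. Comparing
with the point `f v • v` of a ray through any `v` in the unit ball gives `f v ≤ ‖v̂‖`.
-/

open RealInnerProductSpace

lemma eq_sq_of_forall_mul_sub_sq_le {F h : ℝ}
    (hmax : ∀ t : ℝ, 0 ≤ t → t * F - t ^ 2 * h ^ 2 / 2 ≤ F - h ^ 2 / 2) : F = h ^ 2 := by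
  have hF : h ^ 2 / 2 ≤ F := by simpa using hmax 0 le_rfl
  rcases eq_or_ne h 0 with rfl | hh
  · have := hmax 2 zero_le_two
    norm_num at this hF ⊢
    linarith
  · -- compare `t = 1` with the vertex `t = F / h²` of the parabola
    have hh2 : 0 < h ^ 2 := by positivity
    have := hmax (F / h ^ 2) (div_nonneg (by linarith) hh2.le)
    have hval : F / h ^ 2 * F - (F / h ^ 2) ^ 2 * h ^ 2 / 2 = F ^ 2 / h ^ 2 / 2 := by
      field_simp; ring
    rw [hval, div_div, div_le_iff₀ (by positivity)] at this
    nlinarith [sq_nonneg (F - h ^ 2)]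

section

variable {E : Type*} [NormedAddCommGroup E] [InnerProductSpace ℝ E]

lemma half_norm_sub_sq_add_le_iff (a u v : E) (g : E → ℝ) :
    1 / 2 * ‖a - u‖ ^ 2 + g u ≤ 1 / 2 * ‖a - v‖ ^ 2 + g v ↔
      ⟪a, v⟫ - g v - ‖v‖ ^ 2 / 2 ≤ ⟪a, u⟫ - g u - ‖u‖ ^ 2 / 2 := by
  rw [norm_sub_sq_real, norm_sub_sq_real]
  constructor <;> intro h <;> linarith

variable {f : E → ℝ} {u : E}

lemma apply_eq_norm_sq_of_isMax_sub_half_norm_sq (hf : ∀ t : ℝ, 0 ≤ t → ∀ v, f (t • v) = t * f v)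
    (hu : ∀ v, f v - ‖v‖ ^ 2 / 2 ≤ f u - ‖u‖ ^ 2 / 2) : f u = ‖u‖ ^ 2 :=
  eq_sq_of_forall_mul_sub_sq_le fun t ht => by
    simpa [hf t ht, norm_smul, abs_of_nonneg ht, mul_pow, mul_div_assoc] using hu (t • u)

lemma apply_le_norm_of_isMax_sub_half_norm_sq (hf : ∀ t : ℝ, 0 ≤ t → ∀ v, f (t • v) = t * f v)
    (hu : ∀ v, f v - ‖v‖ ^ 2 / 2 ≤ f u - ‖u‖ ^ 2 / 2) {v : E} (hv : ‖v‖ ≤ 1) : f v ≤ ‖u‖ := by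
  rcases le_or_gt (f v) 0 with hle | hpos
  · exact hle.trans (norm_nonneg u)
  · have hs := hu (f v • v)
    rw [hf _ hpos.le, norm_smul, Real.norm_of_nonneg hpos.le,
      apply_eq_norm_sq_of_isMax_sub_half_norm_sq hf hu] at hs
    have hv2 : ‖v‖ ^ 2 ≤ 1 := pow_le_one₀ (norm_nonneg v) hv
    exact le_of_sq_le_sq (by nlinarith) (norm_nonneg u)

end

theorem rpls_v_update_general {p : ℕ} (P : EuclideanSpace ℝ (Fin p) → ℝ)
    (hhom : ∀ c : ℝ, 0 ≤ c → ∀ v, P (c • v) = c * P v)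
    (lam : ℝ) (a : EuclideanSpace ℝ (Fin p))
    (vhat : EuclideanSpace ℝ (Fin p))
    (hmin : ∀ v : EuclideanSpace ℝ (Fin p),
      (1 / 2) * ‖a - vhat‖ ^ 2 + lam * P vhat ≤ (1 / 2) * ‖a - v‖ ^ 2 + lam * P v) :
    ‖(‖vhat‖⁻¹ • vhat : EuclideanSpace ℝ (Fin p))‖ ≤ 1 ∧
    ∀ v : EuclideanSpace ℝ (Fin p), ‖v‖ ≤ 1 →
      ⟪a, v⟫ - lam * P v ≤ ⟪a, ‖vhat‖⁻¹ • vhat⟫ - lam * P (‖vhat‖⁻¹ • vhat) := by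
  set f : EuclideanSpace ℝ (Fin p) → ℝ := fun v => ⟪a, v⟫ - lam * P v
  have hf : ∀ t : ℝ, 0 ≤ t → ∀ v, f (t • v) = t * f v := fun t ht v => by
    simp only [f, real_inner_smul_right, hhom t ht v]
    ring
  have hmax : ∀ v, f v - ‖v‖ ^ 2 / 2 ≤ f vhat - ‖vhat‖ ^ 2 / 2 := fun v =>
    (half_norm_sub_sq_add_le_iff a vhat v (fun w => lam * P w)).1 (hmin v)
  have hstar : f (‖vhat‖⁻¹ • vhat) = ‖vhat‖ := by
    rw [hf _ (inv_nonneg.2 (norm_nonneg _)), apply_eq_norm_sq_of_isMax_sub_half_norm_sq hf hmax,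
      sq, ← mul_assoc, inv_mul_mul_self]
  refine ⟨?_, fun v hv => ?_⟩
  · rw [norm_smul, norm_inv, norm_norm]
    exact inv_mul_le_one_of_le₀ le_rfl (norm_nonneg _)
  · change f v ≤ f (‖vhat‖⁻¹ • vhat)
    rw [hstar]
    exact apply_le_norm_of_isMax_sub_half_norm_sq hf hmax hv

/-- the v-coordinate update of Proposition 1 (RPLS solution).
If `v̂ ≠ 0` globally minimizes the penalized regression objective
`(1/2)‖a − v‖² + λ P(v)` for a convex, nonnegative, positively homogeneous
penalty `P`, then `v* = v̂/‖v̂‖` globally maximizes `⟨a, v⟩ − λ P(v)` over the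
closed unit ball. -/
theorem rpls_v_update {p : ℕ} (P : EuclideanSpace ℝ (Fin p) → ℝ)
    (hconv : ConvexOn ℝ Set.univ P) (hnonneg : ∀ v, 0 ≤ P v)
    (hhom : ∀ c : ℝ, 0 ≤ c → ∀ v, P (c • v) = c * P v)
    (lam : ℝ) (hlam : 0 ≤ lam) (a : EuclideanSpace ℝ (Fin p))
    (vhat : EuclideanSpace ℝ (Fin p))
    (hmin : ∀ v : EuclideanSpace ℝ (Fin p),
      (1 / 2) * ‖a - vhat‖ ^ 2 + lam * P vhat ≤ (1 / 2) * ‖a - v‖ ^ 2 + lam * P v)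
    (hne : vhat ≠ 0) :
    ‖(‖vhat‖⁻¹ • vhat : EuclideanSpace ℝ (Fin p))‖ ≤ 1 ∧
    ∀ v : EuclideanSpace ℝ (Fin p), ‖v‖ ≤ 1 →
      ⟪a, v⟫ - lam * P v ≤ ⟪a, ‖vhat‖⁻¹ • vhat⟫ - lam * P (‖vhat‖⁻¹ • vhat) :=
  rpls_v_update_general P hhom lam a vhat hmin
end

section
/- Let P : ℝ^p → ℝ be convex, nonnegative, and positively homogeneous of degree one, i.e., P(c • v) = c * P(v) for all c ≥ 0 and all v ∈ ℝ^p. Let λ ≥ 0 and a ∈ ℝ^p. If v̂ = 0 is a global minimizer over ℝ^p of g(v) = (1/2)‖a − v‖₂² + λ P(v), then v* = 0 is a global maximizer of f(v) = ⟨a, v⟩ − λ P(v) over the closed unit ball {v : ‖v‖₂ ≤ 1}; equivalently, ⟨a, v⟩ − λ P(v) ≤ 0 for all v with ‖v‖₂ ≤ 1. -/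
/-!
Compare the objective at `0` with its value at `t • v` for `t > 0`: by positive homogeneity the
penalty scales linearly, and expanding the square leaves
`t * (⟪a, v⟫ - λ P v) ≤ t ^ 2 * ‖v‖ ^ 2 / 2`. Dividing by `t` and letting `t → 0⁺` gives
`⟪a, v⟫ - λ P v ≤ 0`.
-/

open RealInnerProductSpace Filter Topology

lemma nonpos_of_forall_pos_le_mul {x c : ℝ} (h : ∀ t, 0 < t → x ≤ t * c) : x ≤ 0 := by
  have hlim : Tendsto (fun t : ℝ => t * c) (𝓝[>] 0) (𝓝 0) := by
    simpa using (tendsto_nhdsWithin_of_tendsto_nhds (continuous_mul_const c).continuousAt :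
      Tendsto (fun t : ℝ => t * c) (𝓝[>] 0) (𝓝 (0 * c)))
  exact ge_of_tendsto hlim (eventually_mem_nhdsWithin.mono h)

section InnerProductSpace

variable {E : Type*} [NormedAddCommGroup E] [InnerProductSpace ℝ E]

lemma half_norm_sub_smul_sq (a v : E) (t : ℝ) :
    (1 / 2) * ‖a - t • v‖ ^ 2 = (1 / 2) * ‖a‖ ^ 2 - t * ⟪a, v⟫ + t * (t * (‖v‖ ^ 2 / 2)) := by
  rw [norm_sub_sq_real, real_inner_smul_right, norm_smul, mul_pow, Real.norm_eq_abs, sq_abs]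
  ring

theorem inner_sub_mul_nonpos_of_isMinOn_zero (P : E → ℝ)
    (hhom : ∀ c : ℝ, 0 ≤ c → ∀ v, P (c • v) = c * P v) (lam : ℝ) (a : E)
    (hmin : IsMinOn (fun v => (1 / 2) * ‖a - v‖ ^ 2 + lam * P v) Set.univ 0) (v : E) :
    ⟪a, v⟫ - lam * P v ≤ 0 := by
  have hP0 : P 0 = 0 := by simpa using hhom 0 le_rfl 0
  refine nonpos_of_forall_pos_le_mul (c := ‖v‖ ^ 2 / 2) fun t ht => ?_
  have hray := isMinOn_univ_iff.1 hmin (t • v)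
  simp only [sub_zero, hP0, mul_zero, add_zero, hhom t ht.le, half_norm_sub_smul_sq] at hray
  have hscaled : t * (⟪a, v⟫ - lam * P v) ≤ t * (t * (‖v‖ ^ 2 / 2)) := by linarith
  exact le_of_mul_le_mul_left hscaled ht

end InnerProductSpace

theorem rpls_v_update_zero_general {p : ℕ} (P : EuclideanSpace ℝ (Fin p) → ℝ)
    (hhom : ∀ c : ℝ, 0 ≤ c → ∀ v, P (c • v) = c * P v)
    (lam : ℝ) (a : EuclideanSpace ℝ (Fin p))
    (hmin : ∀ v : EuclideanSpace ℝ (Fin p),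
      (1 / 2) * ‖a - (0 : EuclideanSpace ℝ (Fin p))‖ ^ 2 + lam * P 0 ≤
        (1 / 2) * ‖a - v‖ ^ 2 + lam * P v) :
    ∀ v : EuclideanSpace ℝ (Fin p), ‖v‖ ≤ 1 → ⟪a, v⟫ - lam * P v ≤ 0 :=
  fun v _ => inner_sub_mul_nonpos_of_isMinOn_zero P hhom lam a (isMinOn_univ_iff.2 hmin) v

/-- degenerate (zero-solution) case of the v-coordinate update in
Proposition 1 of 'Regularized Partial Least Squares'. If `v̂ = 0` globally
minimizes `(1/2)‖a − v‖² + λ P(v)`, then `v* = 0` globally maximizes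
`⟨a, v⟩ − λ P(v)` over the closed unit ball, i.e. `⟨a, v⟩ − λ P(v) ≤ 0` for all
`v` with `‖v‖ ≤ 1`. -/
theorem rpls_v_update_zero {p : ℕ} (P : EuclideanSpace ℝ (Fin p) → ℝ)
    (hconv : ConvexOn ℝ Set.univ P) (hnonneg : ∀ v, 0 ≤ P v)
    (hhom : ∀ c : ℝ, 0 ≤ c → ∀ v, P (c • v) = c * P v)
    (lam : ℝ) (hlam : 0 ≤ lam) (a : EuclideanSpace ℝ (Fin p))
    (hmin : ∀ v : EuclideanSpace ℝ (Fin p),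
      (1 / 2) * ‖a - (0 : EuclideanSpace ℝ (Fin p))‖ ^ 2 + lam * P 0 ≤
        (1 / 2) * ‖a - v‖ ^ 2 + lam * P v) :
    ∀ v : EuclideanSpace ℝ (Fin p), ‖v‖ ≤ 1 → ⟪a, v⟫ - lam * P v ≤ 0 :=
  rpls_v_update_zero_general P hhom lam a hmin
end

section
/- Let P : ℝ^p → ℝ be convex, nonnegative, and positively homogeneous of degree one, i.e., P(c • v) = c * P(v) for all c ≥ 0 and all v ∈ ℝ^p. Let λ ≥ 0 and a ∈ ℝ^p. Then the zero vector is a global minimizer over ℝ^p of g(v) = (1/2)‖a − v‖₂² + λ P(v) if and only if ⟨a, v⟩ ≤ λ P(v) for every v ∈ ℝ^p. -/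
open RealInnerProductSpace

/-- the zero vector globally minimizes the penalized regression
objective `(1/2)‖a − v‖₂² + λ P(v)` over `ℝ^p` if and only if
`⟨a, v⟩ ≤ λ P(v)` for every `v`, where `P` is convex, nonnegative, and
positively homogeneous of degree one and `λ ≥ 0`. -/
theorem zero_minimizer_iff {p : ℕ} (P : EuclideanSpace ℝ (Fin p) → ℝ)
    (hconv : ConvexOn ℝ Set.univ P) (hnonneg : ∀ v, 0 ≤ P v)
    (hhom : ∀ c : ℝ, 0 ≤ c → ∀ v, P (c • v) = c * P v)
    (lam : ℝ) (hlam : 0 ≤ lam) (a : EuclideanSpace ℝ (Fin p)) :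
    (∀ v : EuclideanSpace ℝ (Fin p),
        (1 / 2) * ‖a - (0 : EuclideanSpace ℝ (Fin p))‖ ^ 2 + lam * P 0 ≤
          (1 / 2) * ‖a - v‖ ^ 2 + lam * P v) ↔
    (∀ v : EuclideanSpace ℝ (Fin p), ⟪a, v⟫ ≤ lam * P v) := by
  have hP0 : P 0 = 0 := by
    have := hhom 0 le_rfl 0
    simpa using this
  have hexp : ∀ v : EuclideanSpace ℝ (Fin p),
      ‖a - v‖ ^ 2 = ‖a‖ ^ 2 - 2 * ⟪a, v⟫ + ‖v‖ ^ 2 := by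
    intro v
    rw [← real_inner_self_eq_norm_sq, ← real_inner_self_eq_norm_sq,
      ← real_inner_self_eq_norm_sq, inner_sub_sub_self, real_inner_comm v a]
    ring
  constructor
  · intro h w
    -- apply at t • w and divide by t
    have key : ∀ t : ℝ, 0 < t → ⟪a, w⟫ ≤ t * ‖w‖ ^ 2 / 2 + lam * P w := by
      intro t ht
      have h1 := h (t • w)
      rw [hexp (t • w), hhom t ht.le w, hP0, sub_zero,
        real_inner_smul_right, norm_smul] at h1
      have h2 : t * ⟪a, w⟫ ≤ (1/2) * (t^2 * ‖w‖^2) + lam * (t * P w) := by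
        have : ‖t‖ ^ 2 = t ^ 2 := by
          rw [Real.norm_eq_abs, sq_abs]
        nlinarith [h1, this]
      nlinarith [h2, ht]
    rcases eq_or_ne (‖w‖) 0 with hw | hw
    · have hw0 : w = 0 := norm_eq_zero.mp hw
      subst hw0
      simp [hP0]
    · refine le_of_forall_pos_le_add (fun ε hε => ?_)
      have hwpos : 0 < ‖w‖ ^ 2 := by positivity
      have ht : 0 < 2 * ε / ‖w‖ ^ 2 := by positivity
      have := key _ ht
      calc ⟪a, w⟫ ≤ (2 * ε / ‖w‖ ^ 2) * ‖w‖ ^ 2 / 2 + lam * P w := this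
        _ = lam * P w + ε := by field_simp; ring
  · intro h v
    have h1 := h v
    have h2 := hexp v
    have h3 : 0 ≤ ‖v‖ ^ 2 := by positivity
    rw [hP0, sub_zero, h2]
    nlinarith
end

section
/- Let Q be a real symmetric positive definite p × p matrix, let P : ℝ^p → ℝ be convex, nonnegative, and positively homogeneous of degree one, i.e., P(c • v) = c * P(v) for all c ≥ 0 and all v ∈ ℝ^p, let λ ≥ 0 and a ∈ ℝ^p. Suppose v̂ ∈ ℝ^p is a global minimizer over ℝ^p of the generalized penalized regression objective g(v) = (1/2)(a − v)ᵀQ(a − v) + λ P(v), and suppose v̂ ≠ 0. Then v* = v̂ / sqrt(v̂ᵀQ v̂) is a global maximizer of f(v) = vᵀQ a − λ P(v) over {v ∈ ℝ^p : vᵀQ v ≤ 1}. -/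
open Matrix

/-!
Write `φ v = vᵀQa − λP(v)`, so that `g(v) = ½ aᵀQa + ½ vᵀQv − φ(v)` and `φ` is positively
homogeneous. Comparing `g(v̂)` with `g(0)` gives `φ(v̂) ≥ ½ v̂ᵀQv̂`. For `vᵀQv ≤ 1` with
`t = φ(v) > 0`, comparing `g(v̂)` with `g(t v)` gives `t² ≤ 2φ(v̂) − r²`, where `r = ‖v̂‖_Q`;
since `(2φ(v̂) − r²) r² ≤ φ(v̂)²`, this yields `t r ≤ φ(v̂)`, i.e. `φ(v) ≤ φ(v̂ / r)`.
-/

section NormalizedMinimizer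

variable {E : Type*} [AddCommGroup E] [Module ℝ E] (q : QuadraticForm ℝ E) (φ : E → ℝ)

theorem mul_sqrt_le_of_isMinOn (hφ : ∀ c : ℝ, 0 ≤ c → ∀ v, φ (c • v) = c * φ v) {vhat : E}
    (hq : 0 ≤ q vhat) (hmin : IsMinOn (fun v => q v / 2 - φ v) Set.univ vhat) {v : E}
    (hv : q v ≤ 1) : φ v * √(q vhat) ≤ φ vhat := by
  have hmin' := isMinOn_univ_iff.mp hmin
  have hr : 0 ≤ √(q vhat) := Real.sqrt_nonneg _
  have hr2 : √(q vhat) ^ 2 = q vhat := Real.sq_sqrt hq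
  have hφ0 : φ 0 = 0 := by simpa using hφ 0 le_rfl 0
  have hK : q vhat / 2 ≤ φ vhat := by simpa [hφ0] using hmin' 0
  rcases le_or_gt (φ v) 0 with ht | ht
  · nlinarith [mul_nonpos_of_nonpos_of_nonneg ht hr]
  · have hcmp : φ v ^ 2 ≤ 2 * φ vhat - q vhat := by
      have h := hmin' (φ v • v)
      simp only [q.map_smul, hφ _ ht.le, smul_eq_mul] at h
      nlinarith [mul_le_mul_of_nonneg_left hv (sq_nonneg (φ v))]
    have hsq : (φ v * √(q vhat)) ^ 2 ≤ φ vhat ^ 2 := by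
      rw [mul_pow, hr2]
      nlinarith [mul_le_mul_of_nonneg_right hcmp hq, sq_nonneg (φ vhat - q vhat)]
    exact (pow_le_pow_iff_left₀ (by positivity) (by linarith) two_ne_zero).mp hsq

theorem isMaxOn_inv_sqrt_smul_of_isMinOn (hφ : ∀ c : ℝ, 0 ≤ c → ∀ v, φ (c • v) = c * φ v)
    {vhat : E} (hpos : 0 < q vhat) (hmin : IsMinOn (fun v => q v / 2 - φ v) Set.univ vhat) :
    q ((√(q vhat))⁻¹ • vhat) = 1 ∧ IsMaxOn φ {v | q v ≤ 1} ((√(q vhat))⁻¹ • vhat) := by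
  have hr : 0 < √(q vhat) := Real.sqrt_pos.mpr hpos
  refine ⟨?_, fun v (hv : q v ≤ 1) => show φ v ≤ φ _ from ?_⟩
  · rw [q.map_smul, smul_eq_mul, ← mul_inv, ← sq, Real.sq_sqrt hpos.le, inv_mul_cancel₀ hpos.ne']
  · rw [hφ _ (inv_nonneg.mpr hr.le), ← div_eq_inv_mul, le_div_iff₀ hr]
    exact mul_sqrt_le_of_isMinOn q φ hφ hpos.le hmin hv

end NormalizedMinimizer

theorem Matrix.IsSymm.sub_dotProduct_mulVec_sub {n R : Type*} [Fintype n] [CommRing R]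
    {Q : Matrix n n R} (hQ : Q.IsSymm) (a v : n → R) :
    (a - v) ⬝ᵥ (Q *ᵥ (a - v)) = a ⬝ᵥ (Q *ᵥ a) - 2 * (v ⬝ᵥ (Q *ᵥ a)) + v ⬝ᵥ (Q *ᵥ v) := by
  simp only [mulVec_sub, dotProduct_sub, sub_dotProduct]
  rw [← dotProduct_transpose_mulVec Q v a, hQ.eq]
  ring

theorem Matrix.toQuadraticForm'_apply {n R : Type*} [Fintype n] [DecidableEq n] [CommRing R]
    (Q : Matrix n n R) (x : n → R) : Q.toQuadraticForm' x = x ⬝ᵥ (Q *ᵥ x) := by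
  simp [Matrix.toQuadraticForm', Matrix.toLinearMap₂'_apply']

theorem grpls_v_update_general {p : ℕ} (Q : Matrix (Fin p) (Fin p) ℝ)
    (hQ : Q.PosDef) (P : (Fin p → ℝ) → ℝ)
    (hhom : ∀ c : ℝ, 0 ≤ c → ∀ v, P (c • v) = c * P v)
    (lam : ℝ) (a : Fin p → ℝ) (vhat : Fin p → ℝ)
    (hmin : ∀ v : Fin p → ℝ,
      (1 / 2) * ((a - vhat) ⬝ᵥ (Q *ᵥ (a - vhat))) + lam * P vhat ≤
        (1 / 2) * ((a - v) ⬝ᵥ (Q *ᵥ (a - v))) + lam * P v)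
    (hne : vhat ≠ 0) :
    (((Real.sqrt (vhat ⬝ᵥ (Q *ᵥ vhat)))⁻¹ • vhat) ⬝ᵥ
        (Q *ᵥ ((Real.sqrt (vhat ⬝ᵥ (Q *ᵥ vhat)))⁻¹ • vhat))) ≤ 1 ∧
    ∀ v : Fin p → ℝ, v ⬝ᵥ (Q *ᵥ v) ≤ 1 →
      v ⬝ᵥ (Q *ᵥ a) - lam * P v ≤
        ((Real.sqrt (vhat ⬝ᵥ (Q *ᵥ vhat)))⁻¹ • vhat) ⬝ᵥ (Q *ᵥ a) -
          lam * P ((Real.sqrt (vhat ⬝ᵥ (Q *ᵥ vhat)))⁻¹ • vhat) := by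
  have hsymm : Q.IsSymm := isHermitian_iff_isSymm.mp hQ.isHermitian
  set φ : (Fin p → ℝ) → ℝ := fun v => v ⬝ᵥ (Q *ᵥ a) - lam * P v
  have hφ : ∀ c : ℝ, 0 ≤ c → ∀ v, φ (c • v) = c * φ v := by
    intro c hc v
    simp only [φ, smul_dotProduct, hhom c hc, smul_eq_mul]
    ring
  have hpos : 0 < Q.toQuadraticForm' vhat := hQ.toQuadraticForm' vhat hne
  have hmin' : IsMinOn (fun v => Q.toQuadraticForm' v / 2 - φ v) Set.univ vhat := by
    refine isMinOn_univ_iff.mpr fun v => ?_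
    have h := hmin v
    rw [hsymm.sub_dotProduct_mulVec_sub, hsymm.sub_dotProduct_mulVec_sub] at h
    simp only [toQuadraticForm'_apply, φ]
    linarith
  obtain ⟨hunit, hmax⟩ := isMaxOn_inv_sqrt_smul_of_isMinOn _ φ hφ hpos hmin'
  simp only [toQuadraticForm'_apply] at hunit hmax
  exact ⟨hunit.le, fun v hv => hmax hv⟩

/-- the v-coordinate update of Proposition 2 part 2 (Generalized
RPLS). For symmetric positive definite `Q`, if `v̂ ≠ 0` globally minimizes the
generalized penalized regression objective `(1/2)(a − v)ᵀQ(a − v) + λP(v)`,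
then `v* = v̂ / √(v̂ᵀQv̂)` globally maximizes `vᵀQa − λP(v)` over
`{v : vᵀQv ≤ 1}`. -/
theorem grpls_v_update {p : ℕ} (Q : Matrix (Fin p) (Fin p) ℝ)
    (hQ : Q.PosDef) (P : (Fin p → ℝ) → ℝ)
    (hconv : ConvexOn ℝ Set.univ P) (hnonneg : ∀ v, 0 ≤ P v)
    (hhom : ∀ c : ℝ, 0 ≤ c → ∀ v, P (c • v) = c * P v)
    (lam : ℝ) (hlam : 0 ≤ lam) (a : Fin p → ℝ) (vhat : Fin p → ℝ)
    (hmin : ∀ v : Fin p → ℝ,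
      (1 / 2) * ((a - vhat) ⬝ᵥ (Q *ᵥ (a - vhat))) + lam * P vhat ≤
        (1 / 2) * ((a - v) ⬝ᵥ (Q *ᵥ (a - v))) + lam * P v)
    (hne : vhat ≠ 0) :
    (((Real.sqrt (vhat ⬝ᵥ (Q *ᵥ vhat)))⁻¹ • vhat) ⬝ᵥ
        (Q *ᵥ ((Real.sqrt (vhat ⬝ᵥ (Q *ᵥ vhat)))⁻¹ • vhat))) ≤ 1 ∧
    ∀ v : Fin p → ℝ, v ⬝ᵥ (Q *ᵥ v) ≤ 1 →
      v ⬝ᵥ (Q *ᵥ a) - lam * P v ≤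
        ((Real.sqrt (vhat ⬝ᵥ (Q *ᵥ vhat)))⁻¹ • vhat) ⬝ᵥ (Q *ᵥ a) -
          lam * P ((Real.sqrt (vhat ⬝ᵥ (Q *ᵥ vhat)))⁻¹ • vhat) :=
  grpls_v_update_general Q hQ P hhom lam a vhat hmin hne
end

section
/- Let Q be a real symmetric positive definite p × p matrix, let P : ℝ^p → ℝ be convex, nonnegative, and positively homogeneous of degree one, let λ ≥ 0 and a ∈ ℝ^p. Then the zero vector is a global minimizer over ℝ^p of g(v) = (1/2)(a − v)ᵀQ(a − v) + λ P(v) if and only if vᵀQ a ≤ λ P(v) for every v ∈ ℝ^p; and in that case v* = 0 is a global maximizer of f(v) = vᵀQ a − λ P(v) over {v : vᵀQ v ≤ 1}. -/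
open Matrix

/-! Along a ray the excess `g (t • v) - g 0 = (t² / 2) vᵀQv + t (λ P v - vᵀQa)` is dominated
by its linear term as `t → 0⁺`, and its quadratic term is nonnegative. Hence `0` minimizes `g`
iff `λ P v - vᵀQa ≥ 0` for every `v`, which is also the maximality of `0` for `f`. -/

open Filter Topology in
theorem forall_nonneg_add_iff_of_homogeneous {E : Type*} [SMul ℝ E] {q h : E → ℝ}
    (hq : ∀ v, 0 ≤ q v) (hq_smul : ∀ (t : ℝ) v, q (t • v) = t ^ 2 * q v)
    (hh_smul : ∀ t : ℝ, 0 < t → ∀ v, h (t • v) = t * h v) :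
    (∀ v, 0 ≤ q v + h v) ↔ ∀ v, 0 ≤ h v := by
  refine ⟨fun hqh v => ?_, fun hh v => add_nonneg (hq v) (hh v)⟩
  have hscaled : ∀ᶠ t in 𝓝[>] (0 : ℝ), 0 ≤ t * q v + h v := by
    filter_upwards [self_mem_nhdsWithin] with t (ht : 0 < t)
    have := hqh (t • v)
    rw [hq_smul, hh_smul t ht] at this
    nlinarith
  have hlim : Tendsto (fun t : ℝ => t * q v + h v) (𝓝[>] 0) (𝓝 (h v)) :=
    ((by fun_prop : Continuous fun t : ℝ => t * q v + h v).tendsto' 0 (h v) (by simp)).mono_left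
      nhdsWithin_le_nhds
  exact ge_of_tendsto hlim hscaled

theorem Matrix.smul_dotProduct_mulVec_smul {n R : Type*} [Fintype n] [CommRing R]
    (Q : Matrix n n R) (t : R) (v : n → R) :
    (t • v) ⬝ᵥ (Q *ᵥ (t • v)) = t ^ 2 * (v ⬝ᵥ (Q *ᵥ v)) := by
  rw [mulVec_smul, smul_dotProduct, dotProduct_smul, smul_eq_mul, smul_eq_mul]
  ring

theorem grpls_v_update_zero_general {p : ℕ} (Q : Matrix (Fin p) (Fin p) ℝ)
    (hQ : Q.PosDef) (P : (Fin p → ℝ) → ℝ)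
    (hhom : ∀ c : ℝ, 0 ≤ c → ∀ v, P (c • v) = c * P v)
    (lam : ℝ) (a : Fin p → ℝ) :
    ((∀ v : Fin p → ℝ,
        (1 / 2) * ((a - 0) ⬝ᵥ (Q *ᵥ (a - 0))) + lam * P 0 ≤
          (1 / 2) * ((a - v) ⬝ᵥ (Q *ᵥ (a - v))) + lam * P v) ↔
      (∀ v : Fin p → ℝ, v ⬝ᵥ (Q *ᵥ a) ≤ lam * P v)) ∧
    ((∀ v : Fin p → ℝ,
        (1 / 2) * ((a - 0) ⬝ᵥ (Q *ᵥ (a - 0))) + lam * P 0 ≤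
          (1 / 2) * ((a - v) ⬝ᵥ (Q *ᵥ (a - v))) + lam * P v) →
      ∀ v : Fin p → ℝ, v ⬝ᵥ (Q *ᵥ v) ≤ 1 →
        v ⬝ᵥ (Q *ᵥ a) - lam * P v ≤ 0) := by
  have hP0 : P 0 = 0 := by simpa using hhom 0 le_rfl 0
  have hsymm : Q.IsSymm := isHermitian_iff_isSymm.mp hQ.isHermitian
  have hexcess : ∀ v, (1 / 2) * ((a - 0) ⬝ᵥ (Q *ᵥ (a - 0))) + lam * P 0 ≤
      (1 / 2) * ((a - v) ⬝ᵥ (Q *ᵥ (a - v))) + lam * P v ↔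
      0 ≤ (1 / 2) * (v ⬝ᵥ (Q *ᵥ v)) + (lam * P v - v ⬝ᵥ (Q *ᵥ a)) := fun v => by
    rw [hsymm.sub_dotProduct_mulVec_sub, hsymm.sub_dotProduct_mulVec_sub, hP0]
    simp only [zero_dotProduct, dotProduct_zero, mulVec_zero]
    constructor <;> intro h <;> linarith
  have hmin : (∀ v, (1 / 2) * ((a - 0) ⬝ᵥ (Q *ᵥ (a - 0))) + lam * P 0 ≤
      (1 / 2) * ((a - v) ⬝ᵥ (Q *ᵥ (a - v))) + lam * P v) ↔
      ∀ v : Fin p → ℝ, v ⬝ᵥ (Q *ᵥ a) ≤ lam * P v := by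
    refine (forall_congr' hexcess).trans <| (forall_nonneg_add_iff_of_homogeneous
      (fun v => by simpa using mul_nonneg one_half_pos.le (hQ.posSemidef.dotProduct_mulVec_nonneg v))
      (fun t v => by rw [smul_dotProduct_mulVec_smul]; ring)
      (fun t ht v => ?_)).trans (forall_congr' fun v => sub_nonneg)
    rw [hhom t ht.le, smul_dotProduct, smul_eq_mul]
    ring
  exact ⟨hmin, fun h v _ => sub_nonpos.mpr (hmin.mp h v)⟩

/-- degenerate (zero-solution) case of the v-coordinate update
in Proposition 2 part 2 (Generalized RPLS). For symmetric positive definite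
`Q`, the zero vector globally minimizes `(1/2)(a − v)ᵀQ(a − v) + λP(v)` if and
only if `vᵀQa ≤ λP(v)` for all `v`; and in that case `v* = 0` globally
maximizes `vᵀQa − λP(v)` over `{v : vᵀQv ≤ 1}`. -/
theorem grpls_v_update_zero {p : ℕ} (Q : Matrix (Fin p) (Fin p) ℝ)
    (hQ : Q.PosDef) (P : (Fin p → ℝ) → ℝ)
    (hconv : ConvexOn ℝ Set.univ P) (hnonneg : ∀ v, 0 ≤ P v)
    (hhom : ∀ c : ℝ, 0 ≤ c → ∀ v, P (c • v) = c * P v)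
    (lam : ℝ) (hlam : 0 ≤ lam) (a : Fin p → ℝ) :
    ((∀ v : Fin p → ℝ,
        (1 / 2) * ((a - 0) ⬝ᵥ (Q *ᵥ (a - 0))) + lam * P 0 ≤
          (1 / 2) * ((a - v) ⬝ᵥ (Q *ᵥ (a - v))) + lam * P v) ↔
      (∀ v : Fin p → ℝ, v ⬝ᵥ (Q *ᵥ a) ≤ lam * P v)) ∧
    ((∀ v : Fin p → ℝ,
        (1 / 2) * ((a - 0) ⬝ᵥ (Q *ᵥ (a - 0))) + lam * P 0 ≤
          (1 / 2) * ((a - v) ⬝ᵥ (Q *ᵥ (a - v))) + lam * P v) →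
      ∀ v : Fin p → ℝ, v ⬝ᵥ (Q *ᵥ v) ≤ 1 →
        v ⬝ᵥ (Q *ᵥ a) - lam * P v ≤ 0) :=
  grpls_v_update_zero_general Q hQ P hhom lam a
end
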